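/- Let G be a connected bipartite graph on vertex set V and let e be an edge of G such that the graph G − e obtained from G by deleting e is connected. Then N(P_G) ≤ N(P_{G−e}). -/

import Mathlib

/-!
Every facet of `P_G` has the form `{x ∈ P_G | ⟨y, x⟩ = 1}` with `⟨y, ·⟩ ≤ 1` on `P_G`, i.e.
`y i - y j ≤ 1` along every edge. When `G` is bipartite with 2-colouring `ε`, rounding `y` into
`ε + 2ℤ` gives a normal vector with `y i - y j = ±1` along every edge that still exposes the facet.
Such a `y` also exposes a facet `F ∩ P_{G-e}` of `P_{G-e}`, and since `G - e` is connected this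
facet determines `y` up to an additive constant, hence determines `F`: so `F ↦ F ∩ P_{G-e}` is
injective on facets.
-/
open Finset

/-- The symmetric edge polytope of a finite simple graph `G`: the convex hull of the
vectors `e_i - e_j` for all adjacent pairs `i, j`. -/
def symEdgePolytope {V : Type*} [DecidableEq V] (G : SimpleGraph V) : Set (V → ℝ) :=
  convexHull ℝ {x : V → ℝ | ∃ i j : V, G.Adj i j ∧
    x = fun k => (if k = i then (1 : ℝ) else 0) - (if k = j then (1 : ℝ) else 0)}

/-- A facet of a polytope `P`: a maximal proper (exposed) face of `P`. -/
def IsFacet {V : Type*} (P F : Set (V → ℝ)) : Prop :=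
  IsExposed ℝ P F ∧ F ≠ P ∧
    ∀ F' : Set (V → ℝ), IsExposed ℝ P F' → F' ≠ P → F ⊆ F' → F' = F

/-- `N(P)`: the number of facets of a polytope `P`. -/
noncomputable def numFacets {V : Type*} (P : Set (V → ℝ)) : ℕ :=
  Set.ncard {F : Set (V → ℝ) | IsFacet P F}

section Convex

variable {E : Type*} [AddCommGroup E] [Module ℝ E]

theorem mem_convexHull_setOf_eq_of_forall_le {S : Set E} {l : E →ₗ[ℝ] ℝ} {c : ℝ}
    (hle : ∀ s ∈ S, l s ≤ c) {x : E} (hx : x ∈ convexHull ℝ S) (hlx : l x = c) :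
    x ∈ convexHull ℝ {s ∈ S | l s = c} := by
  set T := {s ∈ S | l s = c}
  set U := {s ∈ S | l s < c}
  have hS : S = T ∪ U := by
    ext s
    simp only [T, U, Set.mem_union, Set.mem_ofPred_eq, ← and_or_left]
    exact ⟨fun hs => ⟨hs, (hle s hs).eq_or_lt⟩, And.left⟩
  have hT_eq : ∀ p ∈ convexHull ℝ T, l p = c :=
    convexHull_min (fun s hs => hs.2) (convex_hyperplane l.isLinear c)
  have hU_lt : ∀ q ∈ convexHull ℝ U, l q < c :=
    convexHull_min (fun s hs => hs.2) (convex_halfSpace_lt l.isLinear c)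
  rcases U.eq_empty_or_nonempty with hU | hU
  · rwa [hS, hU, Set.union_empty] at hx
  rcases T.eq_empty_or_nonempty with hT | hT
  · rw [hS, hT, Set.empty_union] at hx
    exact absurd hlx (hU_lt x hx).ne
  rw [hS, convexHull_union hT hU, mem_convexJoin] at hx
  obtain ⟨p, hp, q, hq, a, b, ha, hb, hab, rfl⟩ := hx
  have hb0 : b = 0 := by
    rw [map_add, map_smul, map_smul, hT_eq p hp, smul_eq_mul, smul_eq_mul] at hlx
    have hbq : b * (c - l q) = 0 := by linear_combination c * hab - hlx
    exact (mul_eq_zero.1 hbq).resolve_right (sub_pos.2 (hU_lt q hq)).ne'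
  subst hb0
  rw [add_zero] at hab
  simpa [hab] using hp

variable [TopologicalSpace E]

theorem isExposed_setOf_eq_of_forall_le {A : Set E} {l : StrongDual ℝ E} {c : ℝ}
    (hle : ∀ x ∈ A, l x ≤ c) : IsExposed ℝ A {x ∈ A | l x = c} := by
  rintro ⟨x₀, hx₀A, hx₀⟩
  refine ⟨l, Set.ext fun x => and_congr_right fun hx => ?_⟩
  exact ⟨fun h y hy => h ▸ hle y hy, fun h => le_antisymm (hle x hx) (hx₀ ▸ h x₀ hx₀A)⟩

theorem IsExposed.exists_eq_setOf_eq_one {A F : Set E} (hA : ∀ x ∈ A, -x ∈ A)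
    (hF : IsExposed ℝ A F) (hFA : F ≠ A) (hFne : F.Nonempty) :
    ∃ l : StrongDual ℝ E, (∀ x ∈ A, l x ≤ 1) ∧ F = {x ∈ A | l x = 1} := by
  obtain ⟨l, rfl⟩ := hF hFne
  obtain ⟨x₀, hx₀A, hx₀⟩ := hFne
  have hmax : ∀ x ∈ A, (∀ y ∈ A, l y ≤ l x) ↔ l x = l x₀ := fun x hx =>
    ⟨fun h => le_antisymm (hx₀ x hx) (h x₀ hx₀A), fun h y hy => h ▸ hx₀ y hy⟩
  have hpos : 0 < l x₀ := by
    by_contra! hle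
    -- Symmetry of `A` forces `l = 0` on `A`, so the face would be all of `A`.
    have hzero : ∀ x ∈ A, l x = l x₀ := fun x hx => by
      have := hx₀ (-x) (hA x hx)
      have := hx₀ x hx
      have := hx₀ (-x₀) (hA x₀ hx₀A)
      simp only [map_neg] at *
      linarith
    exact hFA (Set.ext fun x => ⟨And.left, fun hx => ⟨hx, (hmax x hx).2 (hzero x hx)⟩⟩)
  refine ⟨(l x₀)⁻¹ • l, fun x hx => ?_, Set.ext fun x => and_congr_right fun hx => ?_⟩
  · simpa [inv_mul_le_one₀ hpos] using hx₀ x hx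
  · rw [hmax x hx, smul_apply, smul_eq_mul, inv_mul_eq_one₀ hpos.ne', eq_comm]

end Convex

section SymEdgePolytope

variable {V : Type*} [DecidableEq V] {G H : SimpleGraph V}

def edgeVec (i j : V) : V → ℝ := Pi.single i 1 - Pi.single j 1

def edgeVecs (G : SimpleGraph V) : Set (V → ℝ) := {x | ∃ i j, G.Adj i j ∧ x = edgeVec i j}

theorem edgeVec_swap (i j : V) : edgeVec j i = -edgeVec i j :=
  (neg_sub _ _).symm

theorem edgeVec_mem_edgeVecs {i j : V} (h : G.Adj i j) : edgeVec i j ∈ edgeVecs G :=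
  ⟨i, j, h, rfl⟩

theorem symEdgePolytope_eq_convexHull : symEdgePolytope G = convexHull ℝ (edgeVecs G) := by
  have h (i j : V) :
      (fun k => (if k = i then (1 : ℝ) else 0) - if k = j then 1 else 0) = edgeVec i j := by
    ext k
    simp [edgeVec, Pi.single_apply]
  simp only [symEdgePolytope, edgeVecs, h]

theorem edgeVecs_subset_symEdgePolytope : edgeVecs G ⊆ symEdgePolytope G :=
  symEdgePolytope_eq_convexHull (G := G) ▸ subset_convexHull ℝ _

theorem edgeVec_mem_symEdgePolytope {i j : V} (h : G.Adj i j) :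
    edgeVec i j ∈ symEdgePolytope G :=
  edgeVecs_subset_symEdgePolytope (edgeVec_mem_edgeVecs h)

theorem edgeVecs_finite [Finite V] : (edgeVecs G).Finite :=
  (Set.finite_range fun p : V × V => edgeVec p.1 p.2).subset
    fun _ ⟨i, j, _, hx⟩ => ⟨(i, j), hx.symm⟩

theorem neg_edgeVecs : -edgeVecs G = edgeVecs G := by
  ext x
  refine ⟨fun ⟨i, j, h, hx⟩ => ⟨j, i, h.symm, ?_⟩, fun ⟨i, j, h, hx⟩ => ⟨j, i, h.symm, ?_⟩⟩
  · rw [edgeVec_swap, ← hx, neg_neg]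
  · rw [edgeVec_swap, hx]

theorem neg_mem_symEdgePolytope {x : V → ℝ} (hx : x ∈ symEdgePolytope G) :
    -x ∈ symEdgePolytope G := by
  rwa [symEdgePolytope_eq_convexHull, ← neg_edgeVecs, convexHull_neg, Set.neg_mem_neg,
    ← symEdgePolytope_eq_convexHull]

theorem symEdgePolytope_mono (h : H ≤ G) : symEdgePolytope H ⊆ symEdgePolytope G := by
  simp only [symEdgePolytope_eq_convexHull]
  exact convexHull_mono fun _ ⟨i, j, hij, hx⟩ => ⟨i, j, h hij, hx⟩

theorem IsFacet.exists_adj {F : Set (V → ℝ)} (hF : IsFacet (symEdgePolytope G) F) :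
    ∃ i j, G.Adj i j := by
  obtain ⟨hexp, hFP, -⟩ := hF
  have hP : (symEdgePolytope G).Nonempty := by
    by_contra! hP
    exact hFP ((Set.subset_empty_iff.1 (hP ▸ hexp.subset)).trans hP.symm)
  rw [symEdgePolytope_eq_convexHull, convexHull_nonempty_iff] at hP
  obtain ⟨_, i, j, hij, -⟩ := hP
  exact ⟨i, j, hij⟩

end SymEdgePolytope

section Pairing

variable {V : Type*} [Fintype V]

noncomputable def pairing (y : V → ℝ) : StrongDual ℝ (V → ℝ) :=
  ∑ v, y v • ContinuousLinearMap.proj v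

theorem pairing_apply (y x : V → ℝ) : pairing y x = ∑ v, y v * x v := by
  simp [pairing]

variable [DecidableEq V]

theorem pairing_edgeVec (y : V → ℝ) (i j : V) : pairing y (edgeVec i j) = y i - y j := by
  simp [pairing_apply, edgeVec, mul_sub, Pi.single_apply]

theorem eq_pairing (l : StrongDual ℝ (V → ℝ)) : l = pairing fun v => l (Pi.single v 1) := by
  refine ContinuousLinearMap.coe_injective (LinearMap.pi_ext fun v a => ?_)
  rw [← mul_one a, ← smul_eq_mul, Pi.single_smul']
  simp [pairing_apply, Pi.single_apply, mul_comm]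

end Pairing

namespace SimpleGraph

variable {V : Type*} {G H : SimpleGraph V}

def IsOneLipschitz (G : SimpleGraph V) (y : V → ℝ) : Prop :=
  ∀ ⦃i j⦄, G.Adj i j → y i - y j ≤ 1

def IsUnitStep (G : SimpleGraph V) (y : V → ℝ) : Prop :=
  ∀ ⦃i j⦄, G.Adj i j → y i - y j = 1 ∨ y i - y j = -1

theorem IsUnitStep.isOneLipschitz {y : V → ℝ} (hy : G.IsUnitStep y) : G.IsOneLipschitz y :=
  fun _ _ h => (hy h).elim le_of_eq fun h' => by linarith

theorem IsUnitStep.mono {y : V → ℝ} (hy : G.IsUnitStep y) (h : H ≤ G) : H.IsUnitStep y :=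
  fun _ _ hij => hy (h hij)

theorem Colorable.exists_isUnitStep (h : G.Colorable 2) : ∃ ε : V → ℝ, G.IsUnitStep ε := by
  obtain ⟨C⟩ := h
  refine ⟨fun v => ((C v : ℕ) : ℝ), fun i j hij => ?_⟩
  have hne : (C i : ℕ) ≠ C j := Fin.val_ne_of_ne (C.valid hij)
  have hi := (C i).isLt
  have hj := (C j).isLt
  obtain ⟨h₁, h₂⟩ | ⟨h₁, h₂⟩ :
      ((C i : ℕ) = 1 ∧ (C j : ℕ) = 0) ∨ ((C i : ℕ) = 0 ∧ (C j : ℕ) = 1) := by omega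
  all_goals simp [h₁, h₂]

theorem Preconnected.eq_of_forall_adj {β : Type*} (hG : G.Preconnected) {f : V → β}
    (hf : ∀ ⦃i j⦄, G.Adj i j → f i = f j) (u v : V) : f u = f v := by
  obtain ⟨w⟩ := hG u v
  induction w with
  | nil => rfl
  | cons h _ ih => exact (hf h).trans ih

end SimpleGraph

section Rounding

/-- The point of `a + 2ℤ` in the interval `(z - 1, z + 1]`. -/
noncomputable def roundParity (a z : ℝ) : ℝ := a + 2 * ⌊(z + 1 - a) / 2⌋

theorem sub_one_lt_roundParity (a z : ℝ) : z - 1 < roundParity a z := by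
  have := Int.lt_floor_add_one ((z + 1 - a) / 2)
  rw [roundParity]
  linarith

theorem roundParity_le_add_one (a z : ℝ) : roundParity a z ≤ z + 1 := by
  have := Int.floor_le ((z + 1 - a) / 2)
  rw [roundParity]
  linarith

theorem roundParity_sub_roundParity {a b s t : ℝ} (hab : a - b = 1 ∨ a - b = -1)
    (hst : s - t ≤ 1) (hts : t - s ≤ 1) :
    roundParity a s - roundParity b t = 1 ∨ roundParity a s - roundParity b t = -1 := by
  set n := ⌊(s + 1 - a) / 2⌋ - ⌊(t + 1 - b) / 2⌋
  have hd : roundParity a s - roundParity b t = a - b + 2 * n := by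
    simp only [roundParity, n, Int.cast_sub]
    ring
  -- The difference is an odd integer in `(-3, 3)`.
  obtain ⟨m, hm⟩ : ∃ m : ℤ, roundParity a s - roundParity b t = 2 * m + 1 := by
    rcases hab with h | h
    · exact ⟨n, by rw [hd, h]; ring⟩
    · exact ⟨n - 1, by rw [hd, h]; push_cast; ring⟩
  have h₁ := sub_one_lt_roundParity a s
  have h₂ := roundParity_le_add_one a s
  have h₃ := sub_one_lt_roundParity b t
  have h₄ := roundParity_le_add_one b t
  have hlo : (-2 : ℝ) < m := by linarith
  have hhi : (m : ℝ) < 1 := by linarith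
  obtain rfl | rfl : m = -1 ∨ m = 0 := by
    have : -2 < m := by exact_mod_cast hlo
    have : m < 1 := by exact_mod_cast hhi
    omega
  all_goals norm_num [hm]

theorem roundParity_sub_roundParity_eq_one {a b s t : ℝ} (hab : a - b = 1 ∨ a - b = -1)
    (hst : s - t = 1) (hts : t - s ≤ 1) : roundParity a s - roundParity b t = 1 :=
  (roundParity_sub_roundParity hab hst.le hts).resolve_right fun h => by
    linarith [sub_one_lt_roundParity a s, roundParity_le_add_one b t]

end Rounding

section SymEdgeFace

variable {V : Type*} [Fintype V] [DecidableEq V] {G H : SimpleGraph V} {y z : V → ℝ}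

def symEdgeFace (G : SimpleGraph V) (y : V → ℝ) : Set (V → ℝ) :=
  {x ∈ symEdgePolytope G | pairing y x = 1}

theorem pairing_le_one (hy : G.IsOneLipschitz y) {x : V → ℝ} (hx : x ∈ symEdgePolytope G) :
    pairing y x ≤ 1 := by
  rw [symEdgePolytope_eq_convexHull] at hx
  refine convexHull_min ?_ (convex_halfSpace_le (pairing y).toLinearMap.isLinear 1) hx
  rintro _ ⟨i, j, hij, rfl⟩
  simpa [pairing_edgeVec] using hy hij

theorem edgeVec_mem_symEdgeFace_iff {i j : V} (h : G.Adj i j) :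
    edgeVec i j ∈ symEdgeFace G y ↔ y i - y j = 1 := by
  simp [symEdgeFace, edgeVec_mem_symEdgePolytope h, pairing_edgeVec]

theorem isExposed_symEdgeFace (hy : G.IsOneLipschitz y) :
    IsExposed ℝ (symEdgePolytope G) (symEdgeFace G y) :=
  isExposed_setOf_eq_of_forall_le fun _ => pairing_le_one hy

theorem convex_symEdgeFace : Convex ℝ (symEdgeFace G y) :=
  (convex_convexHull ℝ _).inter (convex_hyperplane (pairing y).toLinearMap.isLinear 1)

theorem symEdgeFace_eq_convexHull (hy : G.IsOneLipschitz y) :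
    symEdgeFace G y = convexHull ℝ {g ∈ edgeVecs G | pairing y g = 1} := by
  refine subset_antisymm ?_ (convexHull_min ?_ convex_symEdgeFace)
  · rintro x ⟨hx, hx1⟩
    rw [symEdgePolytope_eq_convexHull] at hx
    exact mem_convexHull_setOf_eq_of_forall_le (l := (pairing y).toLinearMap)
      (fun g hg => pairing_le_one hy (edgeVecs_subset_symEdgePolytope hg)) hx hx1
  · rintro g ⟨hg, hg1⟩
    exact ⟨edgeVecs_subset_symEdgePolytope hg, hg1⟩

theorem symEdgeFace_nonempty (hy : G.IsUnitStep y) {i j : V} (h : G.Adj i j) :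
    (symEdgeFace G y).Nonempty := by
  rcases hy h with h1 | h1
  · exact ⟨_, (edgeVec_mem_symEdgeFace_iff h).2 h1⟩
  · exact ⟨_, (edgeVec_mem_symEdgeFace_iff h.symm).2 (by linarith)⟩

theorem symEdgeFace_ne {i j : V} (h : G.Adj i j) : symEdgeFace G y ≠ symEdgePolytope G := by
  intro heq
  have h₁ := (edgeVec_mem_symEdgeFace_iff h).1 (heq ▸ edgeVec_mem_symEdgePolytope h)
  have h₂ := (edgeVec_mem_symEdgeFace_iff h.symm).1 (heq ▸ edgeVec_mem_symEdgePolytope h.symm)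
  linarith

theorem symEdgeFace_congr (h : ∀ ⦃i j⦄, G.Adj i j → y i - y j = z i - z j) :
    symEdgeFace G y = symEdgeFace G z := by
  have hEq : Set.EqOn (pairing y).toLinearMap (pairing z).toLinearMap (edgeVecs G) := by
    rintro _ ⟨i, j, hij, rfl⟩
    simp [pairing_edgeVec, h hij]
  refine Set.ext fun x => and_congr_right fun hx => ?_
  rw [symEdgePolytope_eq_convexHull] at hx
  have hspan := convexHull_min Submodule.subset_span (Submodule.convex _) hx
  rw [show pairing y x = pairing z x from LinearMap.eqOn_span' hEq hspan]

theorem symEdgeFace_inter_symEdgePolytope (h : H ≤ G) :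
    symEdgeFace G y ∩ symEdgePolytope H = symEdgeFace H y := by
  ext x
  exact ⟨fun ⟨⟨_, hx1⟩, hx⟩ => ⟨hx, hx1⟩, fun ⟨hx, hx1⟩ => ⟨⟨symEdgePolytope_mono h hx, hx1⟩, hx⟩⟩

theorem SimpleGraph.IsUnitStep.sub_eq_of_symEdgeFace_subset (hy : G.IsUnitStep y)
    (hz : G.IsOneLipschitz z) (h : symEdgeFace G y ⊆ symEdgeFace G z) :
    ∀ ⦃i j⦄, G.Adj i j → y i - y j = z i - z j := by
  have htight : ∀ ⦃i j⦄, G.Adj i j → y i - y j = 1 → z i - z j = 1 := fun i j hij h1 =>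
    (edgeVec_mem_symEdgeFace_iff hij).1 (h ((edgeVec_mem_symEdgeFace_iff hij).2 h1))
  intro i j hij
  rcases hy hij with h1 | h1
  · rw [h1, htight hij h1]
  · have := htight hij.symm (by linarith)
    have := hz hij
    linarith

theorem IsExposed.exists_isOneLipschitz_eq_symEdgeFace {F : Set (V → ℝ)}
    (hF : IsExposed ℝ (symEdgePolytope G) F) (hFP : F ≠ symEdgePolytope G) (hFne : F.Nonempty) :
    ∃ z, G.IsOneLipschitz z ∧ F = symEdgeFace G z := by
  obtain ⟨l, hl, rfl⟩ := hF.exists_eq_setOf_eq_one (fun _ => neg_mem_symEdgePolytope) hFP hFne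
  set z := fun v => l (Pi.single v 1)
  have hlz : l = pairing z := eq_pairing l
  rw [hlz] at hl ⊢
  refine ⟨z, fun i j hij => ?_, rfl⟩
  simpa [pairing_edgeVec] using hl _ (edgeVec_mem_symEdgePolytope hij)

theorem isFacet_symEdgeFace (hy : G.IsUnitStep y) {i j : V} (h : G.Adj i j) :
    IsFacet (symEdgePolytope G) (symEdgeFace G y) := by
  refine ⟨isExposed_symEdgeFace hy.isOneLipschitz, symEdgeFace_ne h, fun F hF hFP hsub => ?_⟩
  obtain ⟨z, hz, rfl⟩ :=
    hF.exists_isOneLipschitz_eq_symEdgeFace hFP ((symEdgeFace_nonempty hy h).mono hsub)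
  exact symEdgeFace_congr fun i j hij => (hy.sub_eq_of_symEdgeFace_subset hz hsub hij).symm

/-- Rounding a normal vector of a facet into `ε + 2ℤ` keeps every tight edge tight. -/
theorem IsFacet.exists_isUnitStep_eq_symEdgeFace {ε : V → ℝ} (hε : G.IsUnitStep ε)
    {F : Set (V → ℝ)} (hF : IsFacet (symEdgePolytope G) F) :
    ∃ y, G.IsUnitStep y ∧ F = symEdgeFace G y := by
  obtain ⟨i, j, hij⟩ := hF.exists_adj
  obtain ⟨hexp, hFP, hmax⟩ := hF
  have hmax' : ∀ y, G.IsUnitStep y → F ⊆ symEdgeFace G y → F = symEdgeFace G y :=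
    fun y hy hsub =>
      (hmax _ (isExposed_symEdgeFace hy.isOneLipschitz) (symEdgeFace_ne hij) hsub).symm
  have hFne : F.Nonempty := by
    by_contra! hF
    have hεF := hmax' ε hε (hF ▸ Set.empty_subset _)
    exact (symEdgeFace_nonempty hε hij).ne_empty (hF ▸ hεF).symm
  obtain ⟨z, hz, rfl⟩ := hexp.exists_isOneLipschitz_eq_symEdgeFace hFP hFne
  set y := fun v => roundParity (ε v) (z v)
  have hy : G.IsUnitStep y := fun i j hij =>
    roundParity_sub_roundParity (hε hij) (hz hij) (hz hij.symm)
  refine ⟨y, hy, hmax' y hy ?_⟩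
  rw [symEdgeFace_eq_convexHull hz]
  refine convexHull_min ?_ convex_symEdgeFace
  rintro _ ⟨⟨i, j, hij, rfl⟩, h1⟩
  rw [pairing_edgeVec] at h1
  exact (edgeVec_mem_symEdgeFace_iff hij).2
    (roundParity_sub_roundParity_eq_one (hε hij) h1 (hz hij.symm))

theorem finite_setOf_isFacet {ε : V → ℝ} (hε : G.IsUnitStep ε) :
    {F | IsFacet (symEdgePolytope G) F}.Finite := by
  refine ((edgeVecs_finite (G := G)).finite_subsets.image (convexHull ℝ)).subset fun F hF => ?_
  obtain ⟨y, hy, rfl⟩ := IsFacet.exists_isUnitStep_eq_symEdgeFace hε hF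
  exact ⟨_, fun g hg => hg.1, (symEdgeFace_eq_convexHull hy.isOneLipschitz).symm⟩

theorem symEdgeFace_eq_of_preconnected (hH : H.Preconnected) (hy : H.IsUnitStep y)
    (hz : H.IsOneLipschitz z) (h : symEdgeFace H y = symEdgeFace H z) (G : SimpleGraph V) :
    symEdgeFace G y = symEdgeFace G z := by
  have hconst := hH.eq_of_forall_adj (f := y - z) fun i j hij => by
    have := hy.sub_eq_of_symEdgeFace_subset hz h.subset hij
    simp only [Pi.sub_apply]
    linarith
  refine symEdgeFace_congr fun i j _ => ?_
  have := hconst i j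
  simp only [Pi.sub_apply] at this
  linarith

end SymEdgeFace

theorem numFacets_le_of_deleteEdge_general {V : Type*} [Fintype V] [DecidableEq V]
    (G : SimpleGraph V) (hbip : G.Colorable 2)
    (e : Sym2 V) (hconn : (G.deleteEdges {e}).Connected) :
    numFacets (symEdgePolytope G) ≤ numFacets (symEdgePolytope (G.deleteEdges {e})) := by
  set H := G.deleteEdges {e}
  have hHG : H ≤ G := G.deleteEdges_le _
  obtain ⟨ε, hε⟩ := hbip.exists_isUnitStep
  refine Set.ncard_le_ncard_of_injOn (· ∩ symEdgePolytope H) ?_ ?_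
    (finite_setOf_isFacet (hε.mono hHG))
  · intro F hF
    obtain ⟨y, hy, rfl⟩ := IsFacet.exists_isUnitStep_eq_symEdgeFace hε hF
    obtain ⟨u, v, huv⟩ := IsFacet.exists_adj hF
    have : Nontrivial V := nontrivial_of_ne u v huv.ne
    obtain ⟨w, huw⟩ := hconn.preconnected.exists_adj_of_nontrivial u
    rw [Set.mem_ofPred_eq, symEdgeFace_inter_symEdgePolytope hHG]
    exact isFacet_symEdgeFace (hy.mono hHG) huw
  · intro F₁ hF₁ F₂ hF₂ h
    obtain ⟨y₁, hy₁, rfl⟩ := IsFacet.exists_isUnitStep_eq_symEdgeFace hε hF₁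
    obtain ⟨y₂, hy₂, rfl⟩ := IsFacet.exists_isUnitStep_eq_symEdgeFace hε hF₂
    simp only [symEdgeFace_inter_symEdgePolytope hHG] at h
    exact symEdgeFace_eq_of_preconnected hconn.preconnected (hy₁.mono hHG)
      (hy₂.mono hHG).isOneLipschitz h G

/-- Let `G` be a connected bipartite graph and `e` an edge of `G` such that
`G - e` is connected. Then `N(P_G) ≤ N(P_{G - e})`. -/
theorem numFacets_le_of_deleteEdge {V : Type*} [Fintype V] [DecidableEq V]
    (G : SimpleGraph V) (hG : G.Connected) (hbip : G.Colorable 2)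
    (e : Sym2 V) (he : e ∈ G.edgeSet) (hconn : (G.deleteEdges {e}).Connected) :
    numFacets (symEdgePolytope G) ≤ numFacets (symEdgePolytope (G.deleteEdges {e})) :=
  numFacets_le_of_deleteEdge_general G hbip e hconn
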